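/- arXiv:2602.20941 — 5 statements merged into one kernel-verified Lean document; each statement's English description precedes it below -/
import Mathlib

section
/- For all λ, t ∈ [0,1] and all 4×4 complex Hermitian matrices B⁺, B⁻ with 0 ⪯ B⁺ ⪯ I₄ and 0 ⪯ B⁻ ⪯ I₄, one has tr(B⁺·Π_z⁺) + tr(B⁻·Π_z⁻) ≤ s_a(λ,t). -/
/-!
`Π_z^ε` is diagonal except for the block `[[a, -R/4], [-R/4, a]]`, `a = εt(1+λ)/4`, with
eigenvalues `a ± R/4`; since `R ≥ t(1+λ)`, we have `a + R/4 ≥ 0 ≥ a - R/4` for either sign.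
Splitting off the positive part, `Π_z^ε = P_ε - N_ε` with `P_ε, N_ε ⪰ 0`, and for an effect
`0 ⪯ B ⪯ I` we get `tr(B(P - N)) ≤ tr(BP) ≤ tr P`. Summing, `tr P₊ + tr P₋ = (1-λ)/2 + R/2 = s_a`.
-/

open Matrix Kronecker ComplexOrder

noncomputable section

/-- Pauli matrices. -/
def pauliX : Matrix (Fin 2) (Fin 2) ℂ := !![0, 1; 1, 0]
def pauliY : Matrix (Fin 2) (Fin 2) ℂ := !![0, -Complex.I; Complex.I, 0]
def pauliZ : Matrix (Fin 2) (Fin 2) ℂ := !![1, 0; 0, -1]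

/-- `Λ = (1-λ)(1+3λ)`. -/
def Lambda (lam : ℝ) : ℝ := (1 - lam) * (1 + 3 * lam)

/-- `R = √(Λ + 4t²λ²)`. -/
def Rr (lam t : ℝ) : ℝ := Real.sqrt (Lambda lam + 4 * t ^ 2 * lam ^ 2)

/-- `s_a(λ,t) = (1/2)(1 - λ + R)`. -/
def sA (lam t : ℝ) : ℝ := (1 / 2) * (1 - lam + Rr lam t)

/-- `s_c(λ,t) = (1/2)(1 - λ + √Λ)√(1-t²)`. -/
def sC (lam t : ℝ) : ℝ :=
  (1 / 2) * (1 - lam + Real.sqrt (Lambda lam)) * Real.sqrt (1 - t ^ 2)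

/-- The 4×4 Hermitian matrix `Π_z^ε` (`ε = ±1`), with diagonal
`(1/4)(−(1−εt)(1−λ), (1+εt)(1−λ), εt(1+λ), εt(1+λ))`, entries `(3,4)` and `(4,3)` equal to
`−R/4`, and all other entries `0`.  The index `Fin 2 × Fin 2` is ordered
`(0,0),(0,1),(1,0),(1,1)`. -/
def Piz (lam t ε : ℝ) : Matrix (Fin 2 × Fin 2) (Fin 2 × Fin 2) ℂ :=
  (!![1, 0; 0, 0] : Matrix (Fin 2) (Fin 2) ℂ) ⊗ₖ
    !![((-(1 - ε * t) * (1 - lam) / 4 : ℝ) : ℂ), 0;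
       0, (((1 + ε * t) * (1 - lam) / 4 : ℝ) : ℂ)] +
  (!![0, 0; 0, 1] : Matrix (Fin 2) (Fin 2) ℂ) ⊗ₖ
    !![((ε * t * (1 + lam) / 4 : ℝ) : ℂ), ((-(Rr lam t) / 4 : ℝ) : ℂ);
       ((-(Rr lam t) / 4 : ℝ) : ℂ), ((ε * t * (1 + lam) / 4 : ℝ) : ℂ)]

/-- `T_pp = √((1+λ+2λ√(1−t²))(1+√((1−t²)Λ)/R))`. -/
def Tpp (lam t : ℝ) : ℝ :=
  Real.sqrt ((1 + lam + 2 * lam * Real.sqrt (1 - t ^ 2)) *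
    (1 + Real.sqrt ((1 - t ^ 2) * Lambda lam) / Rr lam t))

/-- `T_pm = √((1+λ+2λ√(1−t²))(1−√((1−t²)Λ)/R))`. -/
def Tpm (lam t : ℝ) : ℝ :=
  Real.sqrt ((1 + lam + 2 * lam * Real.sqrt (1 - t ^ 2)) *
    (1 - Real.sqrt ((1 - t ^ 2) * Lambda lam) / Rr lam t))

/-- `T_mp = √((1+λ−2λ√(1−t²))(1+√((1−t²)Λ)/R))`. -/
def Tmp (lam t : ℝ) : ℝ :=
  Real.sqrt ((1 + lam - 2 * lam * Real.sqrt (1 - t ^ 2)) *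
    (1 + Real.sqrt ((1 - t ^ 2) * Lambda lam) / Rr lam t))

/-- `T_mm = √((1+λ−2λ√(1−t²))(1−√((1−t²)Λ)/R))`. -/
def Tmm (lam t : ℝ) : ℝ :=
  Real.sqrt ((1 + lam - 2 * lam * Real.sqrt (1 - t ^ 2)) *
    (1 - Real.sqrt ((1 - t ^ 2) * Lambda lam) / Rr lam t))

/-- The 2×2 matrix `E_ε` (`ε = ±1`). -/
def Emat (lam t ε : ℝ) : Matrix (Fin 2) (Fin 2) ℂ :=
  !![((-Real.sqrt (1 - ε * t) * (Tmp lam t + ε * Tpm lam t) : ℝ) : ℂ),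
     ((Real.sqrt (1 - ε * t) * (Tpp lam t + ε * Tmm lam t) : ℝ) : ℂ);
     ((Real.sqrt (1 + ε * t) * (Tmp lam t - ε * Tpm lam t) : ℝ) : ℂ),
     ((Real.sqrt (1 + ε * t) * (Tpp lam t - ε * Tmm lam t) : ℝ) : ℂ)]

/-- The 2×2 matrix `F_ε` (`ε = ±1`). -/
def Fmat (lam t ε : ℝ) : Matrix (Fin 2) (Fin 2) ℂ :=
  !![-Complex.I * ((Real.sqrt (1 - ε * t) * (Tmp lam t + ε * Tpm lam t) : ℝ) : ℂ),
     Complex.I * ((Real.sqrt (1 - ε * t) * (Tpp lam t + ε * Tmm lam t) : ℝ) : ℂ);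
     -Complex.I * ((Real.sqrt (1 + ε * t) * (Tmp lam t - ε * Tpm lam t) : ℝ) : ℂ),
     -Complex.I * ((Real.sqrt (1 + ε * t) * (Tpp lam t - ε * Tmm lam t) : ℝ) : ℂ)]

/-- `Π_x^ε = (√(1−λ)/8) [[0, E_ε], [E_ε^*, 0]]` in 2×2 block form. -/
def Pix (lam t ε : ℝ) : Matrix (Fin 2 × Fin 2) (Fin 2 × Fin 2) ℂ :=
  ((Real.sqrt (1 - lam) / 8 : ℝ) : ℂ) •
    ((!![0, 1; 0, 0] : Matrix (Fin 2) (Fin 2) ℂ) ⊗ₖ Emat lam t ε +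
     (!![0, 0; 1, 0] : Matrix (Fin 2) (Fin 2) ℂ) ⊗ₖ (Emat lam t ε)ᴴ)

/-- `Π_y^ε = (√(1−λ)/8) [[0, F_ε], [F_ε^*, 0]]` in 2×2 block form. -/
def Piy (lam t ε : ℝ) : Matrix (Fin 2 × Fin 2) (Fin 2 × Fin 2) ℂ :=
  ((Real.sqrt (1 - lam) / 8 : ℝ) : ℂ) •
    ((!![0, 1; 0, 0] : Matrix (Fin 2) (Fin 2) ℂ) ⊗ₖ Fmat lam t ε +
     (!![0, 0; 1, 0] : Matrix (Fin 2) (Fin 2) ℂ) ⊗ₖ (Fmat lam t ε)ᴴ)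

end

section EffectBound

variable {𝕜 n : Type*} [RCLike 𝕜] [Fintype n] [DecidableEq n]

open scoped MatrixOrder in
theorem Matrix.PosSemidef.trace_mul_nonneg {A B : Matrix n n 𝕜} (hA : A.PosSemidef)
    (hB : B.PosSemidef) : 0 ≤ (A * B).trace := by
  obtain ⟨C, rfl⟩ := CStarAlgebra.nonneg_iff_eq_star_mul_self.mp hB.nonneg
  rw [star_eq_conjTranspose, ← Matrix.mul_assoc, trace_mul_comm, ← Matrix.mul_assoc]
  exact (hA.mul_mul_conjTranspose_same C).trace_nonneg

theorem Matrix.trace_mul_sub_le_of_effect {B P N : Matrix n n 𝕜} (hB₀ : B.PosSemidef)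
    (hB₁ : (1 - B).PosSemidef) (hP : P.PosSemidef) (hN : N.PosSemidef) :
    (B * (P - N)).trace ≤ P.trace := by
  have hBN : 0 ≤ (B * N).trace := hB₀.trace_mul_nonneg hN
  have hBP : 0 ≤ ((1 - B) * P).trace := hB₁.trace_mul_nonneg hP
  rw [Matrix.sub_mul, Matrix.one_mul, trace_sub] at hBP
  rw [Matrix.mul_sub, trace_sub]
  calc (B * P).trace - (B * N).trace ≤ (B * P).trace := sub_le_self _ hBN
    _ ≤ P.trace := sub_nonneg.mp hBP

end EffectBound

section PizForm

noncomputable def pizForm (d₁ d₂ a o : ℝ) : Matrix (Fin 2 × Fin 2) (Fin 2 × Fin 2) ℂ :=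
  (!![1, 0; 0, 0] : Matrix (Fin 2) (Fin 2) ℂ) ⊗ₖ !![(d₁ : ℂ), 0; 0, (d₂ : ℂ)] +
  (!![0, 0; 0, 1] : Matrix (Fin 2) (Fin 2) ℂ) ⊗ₖ !![(a : ℂ), (o : ℂ); (o : ℂ), (a : ℂ)]

theorem Piz_eq_pizForm (lam t ε : ℝ) :
    Piz lam t ε = pizForm (-(1 - ε * t) * (1 - lam) / 4) ((1 + ε * t) * (1 - lam) / 4)
      (ε * t * (1 + lam) / 4) (-Rr lam t / 4) :=
  rfl

theorem pizForm_sub (d₁ d₂ a o e₁ e₂ b r : ℝ) :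
    pizForm d₁ d₂ a o - pizForm e₁ e₂ b r = pizForm (d₁ - e₁) (d₂ - e₂) (a - b) (o - r) := by
  ext ⟨i, j⟩ ⟨k, l⟩
  fin_cases i <;> fin_cases j <;> fin_cases k <;> fin_cases l <;> simp [pizForm]

theorem pizForm_mul (d₁ d₂ a o e₁ e₂ b r : ℝ) :
    pizForm d₁ d₂ a o * pizForm e₁ e₂ b r =
      pizForm (d₁ * e₁) (d₂ * e₂) (a * b + o * r) (a * r + o * b) := by
  ext ⟨i, j⟩ ⟨k, l⟩
  fin_cases i <;> fin_cases j <;> fin_cases k <;> fin_cases l <;>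
    simp [pizForm, Matrix.mul_apply, Fintype.sum_prod_type, Fin.sum_univ_two] <;> ring

theorem pizForm_conjTranspose (d₁ d₂ a o : ℝ) : (pizForm d₁ d₂ a o)ᴴ = pizForm d₁ d₂ a o := by
  ext ⟨i, j⟩ ⟨k, l⟩
  fin_cases i <;> fin_cases j <;> fin_cases k <;> fin_cases l <;> simp [pizForm]

theorem trace_pizForm (d₁ d₂ a o : ℝ) :
    (pizForm d₁ d₂ a o).trace = ((d₁ + d₂ + 2 * a : ℝ) : ℂ) := by
  simp [pizForm, Matrix.trace, Fintype.sum_prod_type, Fin.sum_univ_two, two_mul, add_assoc]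

-- The square root is again of this form: its 2×2 block `[[p, q], [q, p]]` has
-- `p ± q = √(a ± o)`.
theorem posSemidef_pizForm {d₁ d₂ a o : ℝ} (hd₁ : 0 ≤ d₁) (hd₂ : 0 ≤ d₂) (ho : |o| ≤ a) :
    (pizForm d₁ d₂ a o).PosSemidef := by
  obtain ⟨hao, hoa⟩ : 0 ≤ a + o ∧ 0 ≤ a - o := by constructor <;> linarith [abs_le.mp ho]
  set p := (√(a + o) + √(a - o)) / 2
  set q := (√(a + o) - √(a - o)) / 2
  have hpq₁ : p * p + q * q = a := by
    linear_combination (1 / 2 : ℝ) * (Real.mul_self_sqrt hao + Real.mul_self_sqrt hoa)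
  have hpq₂ : p * q + q * p = o := by
    linear_combination (1 / 2 : ℝ) * (Real.mul_self_sqrt hao - Real.mul_self_sqrt hoa)
  have hsq : (pizForm √d₁ √d₂ p q)ᴴ * pizForm √d₁ √d₂ p q = pizForm d₁ d₂ a o := by
    rw [pizForm_conjTranspose, pizForm_mul, Real.mul_self_sqrt hd₁, Real.mul_self_sqrt hd₂,
      hpq₁, hpq₂]
  exact hsq ▸ posSemidef_conjTranspose_mul_self _

end PizForm

-- `R² = t²(1+λ)² + (1-t²)Λ`.
theorem abs_mul_one_add_le_Rr {lam t : ℝ} (hlam : lam ∈ Set.Icc (0 : ℝ) 1) (ht : |t| ≤ 1) :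
    |t| * (1 + lam) ≤ Rr lam t := by
  have hΛ : 0 ≤ Lambda lam := mul_nonneg (by linarith [hlam.2]) (by linarith [hlam.1])
  have ht2 : t ^ 2 ≤ 1 := by nlinarith [sq_abs t, abs_nonneg t]
  refine Real.le_sqrt_of_sq_le ?_
  have hid : Lambda lam + 4 * t ^ 2 * lam ^ 2 =
      t ^ 2 * (1 + lam) ^ 2 + (1 - t ^ 2) * Lambda lam := by
    unfold Lambda; ring
  rw [hid, mul_pow, sq_abs]
  nlinarith [mul_nonneg (sub_nonneg.mpr ht2) hΛ]

theorem re_trace_mul_Piz_le {lam t ε : ℝ} (hlam : lam ∈ Set.Icc (0 : ℝ) 1) (ht : |t| ≤ 1)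
    (hε : |ε| ≤ 1) {B : Matrix (Fin 2 × Fin 2) (Fin 2 × Fin 2) ℂ} (hB₀ : B.PosSemidef)
    (hB₁ : (1 - B).PosSemidef) :
    (B * Piz lam t ε).trace.re ≤
      (1 + ε * t) * (1 - lam) / 4 + (Rr lam t + ε * t * (1 + lam)) / 4 := by
  have hεt : |ε * t| ≤ 1 := by
    rw [abs_mul]; nlinarith [abs_nonneg ε, abs_nonneg t]
  have hεtR : |ε * t * (1 + lam)| ≤ Rr lam t :=
    calc |ε * t * (1 + lam)| = |ε| * (|t| * (1 + lam)) := by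
          rw [abs_mul, abs_mul, abs_of_nonneg (by linarith [hlam.1] : (0 : ℝ) ≤ 1 + lam),
            mul_assoc]
      _ ≤ |t| * (1 + lam) :=
          mul_le_of_le_one_left (mul_nonneg (abs_nonneg t) (by linarith [hlam.1])) hε
      _ ≤ Rr lam t := abs_mul_one_add_le_Rr hlam ht
  obtain ⟨hεt₁, hεt₂⟩ := abs_le.mp hεt
  obtain ⟨hR₁, hR₂⟩ := abs_le.mp hεtR
  have hl : 0 ≤ 1 - lam := by linarith [hlam.2]
  have hdec : Piz lam t ε =
      pizForm 0 ((1 + ε * t) * (1 - lam) / 4) ((Rr lam t + ε * t * (1 + lam)) / 8)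
        (-((Rr lam t + ε * t * (1 + lam)) / 8)) -
      pizForm ((1 - ε * t) * (1 - lam) / 4) 0 ((Rr lam t - ε * t * (1 + lam)) / 8)
        ((Rr lam t - ε * t * (1 + lam)) / 8) := by
    rw [pizForm_sub, Piz_eq_pizForm]
    congr 1 <;> ring
  rw [hdec]
  refine (Complex.re_le_re (Matrix.trace_mul_sub_le_of_effect hB₀ hB₁ ?_ ?_)).trans ?_
  · exact posSemidef_pizForm le_rfl (by nlinarith) (by rw [abs_neg, abs_of_nonneg (by linarith)])
  · exact posSemidef_pizForm (by nlinarith) le_rfl (by rw [abs_of_nonneg]; linarith)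
  · rw [trace_pizForm, Complex.ofReal_re]
    linarith

/-- **Primal bound, aligned case.** For all `λ, t ∈ [0,1]` and all effects
`0 ⪯ B⁺, B⁻ ⪯ I₄`, one has `tr(B⁺ Π_z⁺) + tr(B⁻ Π_z⁻) ≤ s_a(λ,t)`. -/
theorem aligned_primal_bound (lam t : ℝ)
    (hlam : lam ∈ Set.Icc (0 : ℝ) 1) (ht : t ∈ Set.Icc (0 : ℝ) 1)
    (Bp Bm : Matrix (Fin 2 × Fin 2) (Fin 2 × Fin 2) ℂ)
    (hBp0 : Bp.PosSemidef) (hBp1 : (1 - Bp).PosSemidef)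
    (hBm0 : Bm.PosSemidef) (hBm1 : (1 - Bm).PosSemidef) :
    ((Bp * Piz lam t 1).trace + (Bm * Piz lam t (-1)).trace).re ≤ sA lam t := by
  have ht' : |t| ≤ 1 := abs_le.mpr ⟨by linarith [ht.1], ht.2⟩
  have hp := re_trace_mul_Piz_le (ε := 1) hlam ht' (by norm_num) hBp0 hBp1
  have hm := re_trace_mul_Piz_le (ε := -1) hlam ht' (by norm_num) hBm0 hBm1
  rw [Complex.add_re, sA]
  linarith
end

section
/- Let λ, t ∈ [0,1] with (λ,t) ≠ (1,0), and let B = (1/2)·(I₄ + (1/2)·σz⊗(σx−σz) − (1/2)·I₂⊗(σx+σz)) (Kronecker products of 2×2 matrices). Then B is an orthogonal projection of rank 2 (B² = B, B^* = B, tr B = 2), and tr(B·Π_z⁺) + tr(B·Π_z⁻) = s_a(λ,t), tr(B·Π_x⁺) + tr(B·Π_x⁻) = 0, tr(B·Π_y⁺) + tr(B·Π_y⁻) = 0. -/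
open Matrix Kronecker ComplexOrder

noncomputable section
/-- The primal feasible point `B = (1/2)(I₄ + (1/2) σz⊗(σx−σz) − (1/2) I₂⊗(σx+σz))`. -/
def Bfeas : Matrix (Fin 2 × Fin 2) (Fin 2 × Fin 2) ℂ :=
  (1 / 2 : ℂ) • ((1 : Matrix (Fin 2 × Fin 2) (Fin 2 × Fin 2) ℂ) +
    (1 / 2 : ℂ) • (pauliZ ⊗ₖ (pauliX - pauliZ)) -
    (1 / 2 : ℂ) • ((1 : Matrix (Fin 2) (Fin 2) ℂ) ⊗ₖ (pauliX + pauliZ)))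
end

lemma Bfeas_eq : Bfeas = (!![1,0;0,0] : Matrix (Fin 2) (Fin 2) ℂ) ⊗ₖ !![0,0;0,1]
    + (!![0,0;0,1] : Matrix (Fin 2) (Fin 2) ℂ) ⊗ₖ !![1/2,-1/2;-1/2,1/2] := by
  ext ⟨i,j⟩ ⟨k,l⟩
  fin_cases i <;> fin_cases j <;> fin_cases k <;> fin_cases l <;>
    simp [Bfeas, pauliX, pauliZ, Matrix.one_apply, Matrix.kroneckerMap_apply,
      Prod.ext_iff] <;> norm_num

set_option maxHeartbeats 3200000 in
/-- **Primal feasibility, aligned case.** `B` is a rank-2 orthogonal projection and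
`tr(B Π_z⁺) + tr(B Π_z⁻) = s_a(λ,t)`, `tr(B Π_x⁺) + tr(B Π_x⁻) = 0`,
`tr(B Π_y⁺) + tr(B Π_y⁻) = 0`. -/
theorem aligned_primal_feasible (lam t : ℝ)
    (hlam : lam ∈ Set.Icc (0 : ℝ) 1) (ht : t ∈ Set.Icc (0 : ℝ) 1)
    (hne : (lam, t) ≠ (1, 0)) :
    Bfeas * Bfeas = Bfeas ∧ Bfeasᴴ = Bfeas ∧ Bfeas.trace = 2 ∧
    (Bfeas * Piz lam t 1).trace + (Bfeas * Piz lam t (-1)).trace = (sA lam t : ℂ) ∧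
    (Bfeas * Pix lam t 1).trace + (Bfeas * Pix lam t (-1)).trace = 0 ∧
    (Bfeas * Piy lam t 1).trace + (Bfeas * Piy lam t (-1)).trace = 0 := by
  refine ⟨?_, ?_, ?_, ?_, ?_, ?_⟩
  · ext ⟨i,j⟩ ⟨k,l⟩
    fin_cases i <;> fin_cases j <;> fin_cases k <;> fin_cases l <;>
      simp [Bfeas_eq, Matrix.mul_apply, Fintype.sum_prod_type, Fin.sum_univ_succ,
        Matrix.kroneckerMap_apply] <;> norm_num
  · ext ⟨i,j⟩ ⟨k,l⟩
    fin_cases i <;> fin_cases j <;> fin_cases k <;> fin_cases l <;>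
      simp [Bfeas_eq, Matrix.conjTranspose_apply, Matrix.kroneckerMap_apply] <;> norm_num
  · simp [Bfeas_eq, Matrix.trace_kronecker, Matrix.trace_fin_two]
    norm_num
  · simp only [Piz, Bfeas_eq, Matrix.add_mul, Matrix.mul_add, ← Matrix.mul_kronecker_mul,
      Matrix.trace_add, Matrix.trace_kronecker, Matrix.trace_fin_two,
      Matrix.mul_apply, Fin.sum_univ_two, sA,
      Matrix.cons_val_zero, Matrix.cons_val_one, Matrix.head_cons, Matrix.head_fin_const,
      Matrix.cons_val', Matrix.empty_val', Matrix.cons_val_fin_one, Matrix.of_apply]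
    push_cast
    ring
  · simp only [Pix, Emat, Bfeas_eq, Matrix.add_mul, Matrix.mul_add, mul_smul_comm,
      ← Matrix.mul_kronecker_mul, Matrix.trace_smul, Matrix.conjTranspose_apply,
      Matrix.trace_add, Matrix.trace_kronecker, Matrix.trace_fin_two,
      Matrix.mul_apply, Fin.sum_univ_two, Complex.star_def, Complex.conj_ofReal,
      Matrix.cons_val_zero, Matrix.cons_val_one, Matrix.head_cons, Matrix.head_fin_const,
      Matrix.cons_val', Matrix.empty_val', Matrix.cons_val_fin_one, Matrix.of_apply,
      smul_eq_mul]
    push_cast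
    ring
  · simp only [Piy, Fmat, Bfeas_eq, Matrix.add_mul, Matrix.mul_add, mul_smul_comm,
      ← Matrix.mul_kronecker_mul, Matrix.trace_smul, Matrix.conjTranspose_apply,
      Matrix.trace_add, Matrix.trace_kronecker, Matrix.trace_fin_two,
      Matrix.mul_apply, Fin.sum_univ_two, Complex.star_def, Complex.conj_ofReal,
      _root_.map_mul, _root_.map_neg, Complex.conj_I,
      Matrix.cons_val_zero, Matrix.cons_val_one, Matrix.head_cons, Matrix.head_fin_const,
      Matrix.cons_val', Matrix.empty_val', Matrix.cons_val_fin_one, Matrix.of_apply,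
      smul_eq_mul]
    push_cast
    ring
end

section
/- Let λ, t ∈ [0,1], let B = (1/2)·(I₄ + (1/2)·σz⊗(σx−σz) − (1/2)·I₂⊗(σx+σz)), and set μ^± = B·Π_z^±·B. Then μ⁺ and μ⁻ are positive semidefinite, μ⁺ − Π_z⁺ and μ⁻ − Π_z⁻ are positive semidefinite, and tr(μ⁺) + tr(μ⁻) = s_a(λ,t). -/
open Matrix Kronecker ComplexOrder

noncomputable section
/-- The dual feasible point `μ^ε = B Π_z^ε B`. -/
def muA (lam t ε : ℝ) : Matrix (Fin 2 × Fin 2) (Fin 2 × Fin 2) ℂ :=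
  Bfeas * Piz lam t ε * Bfeas
end


noncomputable section
/-- Helper 4×4 matrix: diagonal `(p,q,r,r)` with `(3,4),(4,3)` entries `s*r`. -/
def Mhelp (p q r s : ℝ) : Matrix (Fin 2 × Fin 2) (Fin 2 × Fin 2) ℂ :=
  (!![1,0;0,0] : Matrix (Fin 2) (Fin 2) ℂ) ⊗ₖ !![(p:ℂ),0;0,(q:ℂ)] +
  (!![0,0;0,1] : Matrix (Fin 2) (Fin 2) ℂ) ⊗ₖ !![(r:ℂ),((s*r:ℝ):ℂ); ((s*r:ℝ):ℂ),(r:ℂ)]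
end

lemma Mhelp_posSemidef (p q r s : ℝ) (hp : 0 ≤ p) (hq : 0 ≤ q) (hr : 0 ≤ r)
    (hs : s = 1 ∨ s = -1) : (Mhelp p q r s).PosSemidef := by
  have key : Mhelp p q r s =
      ((!![1,0;0,0] : Matrix (Fin 2) (Fin 2) ℂ) ⊗ₖ !![((Real.sqrt p:ℝ):ℂ),0;0,((Real.sqrt q:ℝ):ℂ)] +
       (!![0,0;0,1] : Matrix (Fin 2) (Fin 2) ℂ) ⊗ₖ
         !![((Real.sqrt r:ℝ):ℂ),((s*Real.sqrt r:ℝ):ℂ);0,0])ᴴ *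
      ((!![1,0;0,0] : Matrix (Fin 2) (Fin 2) ℂ) ⊗ₖ !![((Real.sqrt p:ℝ):ℂ),0;0,((Real.sqrt q:ℝ):ℂ)] +
       (!![0,0;0,1] : Matrix (Fin 2) (Fin 2) ℂ) ⊗ₖ
         !![((Real.sqrt r:ℝ):ℂ),((s*Real.sqrt r:ℝ):ℂ);0,0]) := by
    have hps : (Real.sqrt p) * (Real.sqrt p) = p := Real.mul_self_sqrt hp
    have hqs : (Real.sqrt q) * (Real.sqrt q) = q := Real.mul_self_sqrt hq
    have hrs : (Real.sqrt r) * (Real.sqrt r) = r := Real.mul_self_sqrt hr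
    have hss : s ^ 2 = 1 := by rcases hs with h | h <;> rw [h] <;> norm_num
    ext ⟨i,k⟩ ⟨j,l⟩
    fin_cases i <;> fin_cases k <;> fin_cases j <;> fin_cases l <;>
      simp [Mhelp, Matrix.mul_apply, Fintype.sum_prod_type, Fin.sum_univ_two,
        Matrix.conjTranspose_apply] <;> push_cast <;> ring_nf <;> norm_cast <;>
      simp [Real.sq_sqrt hp, Real.sq_sqrt hq, Real.sq_sqrt hr, hss]
  rw [key]
  exact Matrix.posSemidef_conjTranspose_mul_self _

lemma Bfeas_eq_s6 : Bfeas = Mhelp 0 1 (1/2) (-1) := by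
  ext ⟨i,k⟩ ⟨j,l⟩
  fin_cases i <;> fin_cases k <;> fin_cases j <;> fin_cases l <;>
    simp [Bfeas, pauliX, pauliZ, Mhelp, Matrix.one_apply] <;> norm_num [Prod.ext_iff]

set_option maxHeartbeats 1000000 in
lemma muA_eq (lam t ε : ℝ) : muA lam t ε =
    Mhelp 0 ((1 + ε*t)*(1 - lam)/4) ((ε*t*(1 + lam) + Rr lam t)/8) (-1) := by
  rw [muA, Bfeas_eq_s6]
  ext ⟨i,k⟩ ⟨j,l⟩
  fin_cases i <;> fin_cases k <;> fin_cases j <;> fin_cases l <;>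
    simp [Piz, Mhelp, Matrix.mul_apply, Fintype.sum_prod_type, Fin.sum_univ_two] <;>
    push_cast <;> ring

set_option maxHeartbeats 1000000 in
lemma diff_eq (lam t ε : ℝ) : muA lam t ε - Piz lam t ε =
    Mhelp ((1 - ε*t)*(1 - lam)/4) 0 ((Rr lam t - ε*t*(1 + lam))/8) 1 := by
  rw [muA, Bfeas_eq_s6]
  ext ⟨i,k⟩ ⟨j,l⟩
  fin_cases i <;> fin_cases k <;> fin_cases j <;> fin_cases l <;>
    simp [Piz, Mhelp, Matrix.mul_apply, Fintype.sum_prod_type, Fin.sum_univ_two] <;>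
    push_cast <;> ring

lemma Rr_key (lam t : ℝ) (hlam : lam ∈ Set.Icc (0 : ℝ) 1) (ht : t ∈ Set.Icc (0 : ℝ) 1) :
    t * (1 + lam) ≤ Rr lam t := by
  obtain ⟨h0, h1⟩ := hlam
  obtain ⟨ht0, ht1⟩ := ht
  have : t * (1 + lam) = Real.sqrt ((t * (1 + lam)) ^ 2) :=
    (Real.sqrt_sq (by positivity)).symm
  rw [this, Rr]
  apply Real.sqrt_le_sqrt
  have h2 : 0 ≤ (1 - t ^ 2) * ((1 - lam) * (1 + 3 * lam)) :=
    mul_nonneg (by nlinarith) (mul_nonneg (by linarith) (by linarith))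
  unfold Lambda
  nlinarith

/-- **Dual feasibility, aligned case.** With `μ^± = B Π_z^± B`: the matrices `μ⁺, μ⁻` and
`μ⁺ − Π_z⁺`, `μ⁻ − Π_z⁻` are positive semidefinite, and `tr(μ⁺) + tr(μ⁻) = s_a(λ,t)`. -/
theorem aligned_dual_feasible (lam t : ℝ)
    (hlam : lam ∈ Set.Icc (0 : ℝ) 1) (ht : t ∈ Set.Icc (0 : ℝ) 1) :
    (muA lam t 1).PosSemidef ∧ (muA lam t (-1)).PosSemidef ∧
    (muA lam t 1 - Piz lam t 1).PosSemidef ∧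
    (muA lam t (-1) - Piz lam t (-1)).PosSemidef ∧
    (muA lam t 1).trace + (muA lam t (-1)).trace = (sA lam t : ℂ) := by
  obtain ⟨h0, h1⟩ := hlam
  obtain ⟨ht0, ht1⟩ := ht
  have hR0 : 0 ≤ Rr lam t := Real.sqrt_nonneg _
  have hRk := Rr_key lam t ⟨h0, h1⟩ ⟨ht0, ht1⟩
  refine ⟨?_, ?_, ?_, ?_, ?_⟩
  · rw [muA_eq]
    exact Mhelp_posSemidef _ _ _ _ le_rfl (by nlinarith) (by nlinarith) (Or.inr rfl)
  · rw [muA_eq]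
    exact Mhelp_posSemidef _ _ _ _ le_rfl (by nlinarith) (by nlinarith) (Or.inr rfl)
  · rw [diff_eq]
    exact Mhelp_posSemidef _ _ _ _ (by nlinarith) le_rfl (by nlinarith) (Or.inl rfl)
  · rw [diff_eq]
    exact Mhelp_posSemidef _ _ _ _ (by nlinarith) le_rfl (by nlinarith) (Or.inl rfl)
  · rw [muA_eq, muA_eq]
    simp [Mhelp, Matrix.trace, Matrix.diag, Fintype.sum_prod_type, Fin.sum_univ_two, sA]
    push_cast
    ring
end

section
/- Let λ, t ∈ [0,1], let B = (1/2)·(I₄ + (1/2)·σz⊗(σx−σz) − (1/2)·I₂⊗(σx+σz)), and set μ^± = B·Π_z^±·B. Then the characteristic polynomial of μ^± equals x²·(x − (1/4)(1±t)(1−λ))·(x − (1/4)(R ± t(1+λ))), and the characteristic polynomial of μ^± − Π_z^± equals x²·(x − (1/4)(1∓t)(1−λ))·(x − (1/4)(R ∓ t(1+λ))). -/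
open Matrix Kronecker ComplexOrder

noncomputable section AuxAligned

open Polynomial

/-- The index equivalence used to view `Fin 2 × Fin 2` matrices as 2×2 block matrices. -/
def eqIdx4 : (Fin 2 × Fin 2) ≃ (Fin 2 ⊕ Fin 2) := finProdFinEquiv.trans finSumFinEquiv.symm

lemma cp2_aux (p q r w : ℂ) :
    (!![p,q;r,w] : Matrix (Fin 2) (Fin 2) ℂ).charpoly
      = (X - C p) * (X - C w) - C q * C r := by
  have hc : charmatrix (!![p,q;r,w] : Matrix (Fin 2) (Fin 2) ℂ)
      = !![X - C p, -C q; -C r, X - C w] := by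
    ext i j
    fin_cases i <;> fin_cases j <;> simp [charmatrix_apply, Matrix.diagonal]
  rw [Matrix.charpoly, hc, Matrix.det_fin_two_of]
  ring

lemma Bfeas_eq_s7 :
    Bfeas = (Matrix.fromBlocks !![0,0;0,1] 0 0 !![1/2,-1/2;-1/2,1/2]).submatrix eqIdx4 eqIdx4 := by
  ext ⟨i1,i2⟩ ⟨j1,j2⟩
  fin_cases i1 <;> fin_cases i2 <;> fin_cases j1 <;> fin_cases j2 <;>
    simp [Bfeas, pauliX, pauliZ, eqIdx4, Matrix.one_apply, finProdFinEquiv, finSumFinEquiv,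
      Matrix.submatrix_apply, Matrix.fromBlocks, Fin.addCases, Fin.subNat, Fin.castLT,
      Matrix.vecHead, Matrix.vecTail, Prod.ext_iff] <;> norm_num

lemma Piz_eq (lam t ε : ℝ) :
    Piz lam t ε =
      (Matrix.fromBlocks
        !![((-(1 - ε * t) * (1 - lam) / 4 : ℝ) : ℂ), 0;
           0, (((1 + ε * t) * (1 - lam) / 4 : ℝ) : ℂ)] 0 0
        !![((ε * t * (1 + lam) / 4 : ℝ) : ℂ), ((-(Rr lam t) / 4 : ℝ) : ℂ);
           ((-(Rr lam t) / 4 : ℝ) : ℂ), ((ε * t * (1 + lam) / 4 : ℝ) : ℂ)]).submatrix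
        eqIdx4 eqIdx4 := by
  ext ⟨i1,i2⟩ ⟨j1,j2⟩
  fin_cases i1 <;> fin_cases i2 <;> fin_cases j1 <;> fin_cases j2 <;>
    simp [Piz, eqIdx4, finProdFinEquiv, finSumFinEquiv,
      Matrix.submatrix_apply, Matrix.fromBlocks, Fin.addCases, Fin.subNat, Fin.castLT,
      Matrix.vecHead, Matrix.vecTail]

end AuxAligned

open Polynomial in
/-- **Eigenvalues of the aligned dual variables.** For `ε = ±1`,
`charpoly(μ^ε) = x²(x − (1/4)(1+εt)(1−λ))(x − (1/4)(R + εt(1+λ)))` and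
`charpoly(μ^ε − Π_z^ε) = x²(x − (1/4)(1−εt)(1−λ))(x − (1/4)(R − εt(1+λ)))`. -/

theorem aligned_dual_charpoly (lam t : ℝ)
    (hlam : lam ∈ Set.Icc (0 : ℝ) 1) (ht : t ∈ Set.Icc (0 : ℝ) 1)
    (ε : ℝ) (hε : ε = 1 ∨ ε = -1) :
    (muA lam t ε).charpoly =
      X ^ 2 * (X - C (((1 + ε * t) * (1 - lam) / 4 : ℝ) : ℂ)) *
        (X - C (((Rr lam t + ε * t * (1 + lam)) / 4 : ℝ) : ℂ)) ∧
    (muA lam t ε - Piz lam t ε).charpoly =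
      X ^ 2 * (X - C (((1 - ε * t) * (1 - lam) / 4 : ℝ) : ℂ)) *
        (X - C (((Rr lam t - ε * t * (1 + lam)) / 4 : ℝ) : ℂ)) := by
  classical
  set a : ℂ := ((-(1 - ε * t) * (1 - lam) / 4 : ℝ) : ℂ) with ha
  set b : ℂ := (((1 + ε * t) * (1 - lam) / 4 : ℝ) : ℂ) with hb
  set c : ℂ := ((ε * t * (1 + lam) / 4 : ℝ) : ℂ) with hc
  set u : ℂ := ((-(Rr lam t) / 4 : ℝ) : ℂ) with hu
  set s : ℂ := (c - u) / 2 with hs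
  have key : ∀ (A D : Matrix (Fin 2) (Fin 2) ℂ),
      ((Matrix.fromBlocks A 0 0 D).submatrix eqIdx4 eqIdx4
          : Matrix (Fin 2 × Fin 2) (Fin 2 × Fin 2) ℂ).charpoly
        = A.charpoly * D.charpoly := by
    intro A D
    have h1 : ((Matrix.fromBlocks A 0 0 D).submatrix eqIdx4 eqIdx4
          : Matrix (Fin 2 × Fin 2) (Fin 2 × Fin 2) ℂ)
        = Matrix.reindex eqIdx4.symm eqIdx4.symm (Matrix.fromBlocks A 0 0 D) := by
      simp [Matrix.reindex_apply]
    rw [h1, Matrix.charpoly_reindex, Matrix.charpoly_fromBlocks_zero₂₁]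
  have e1 : (!![0,0;0,1] : Matrix (Fin 2) (Fin 2) ℂ) * !![a,0;0,b] * !![0,0;0,1] = !![0,0;0,b] := by
    rw [Matrix.mul_fin_two, Matrix.mul_fin_two]
    ext i j
    fin_cases i <;> fin_cases j <;> simp
  have e2 : (!![1/2,-1/2;-1/2,1/2] : Matrix (Fin 2) (Fin 2) ℂ) * !![c,u;u,c] *
      !![1/2,-1/2;-1/2,1/2] = !![s,-s;-s,s] := by
    rw [Matrix.mul_fin_two, Matrix.mul_fin_two]
    ext i j
    fin_cases i <;> fin_cases j <;> (simp [hs]; try ring)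
  have hmul : (Matrix.fromBlocks (!![0,0;0,1] : Matrix (Fin 2) (Fin 2) ℂ) 0 0 !![1/2,-1/2;-1/2,1/2]) *
      (Matrix.fromBlocks !![a, 0; 0, b] 0 0 !![c, u; u, c]) *
      (Matrix.fromBlocks (!![0,0;0,1] : Matrix (Fin 2) (Fin 2) ℂ) 0 0 !![1/2,-1/2;-1/2,1/2]) =
      Matrix.fromBlocks !![0,0;0,b] 0 0 !![s,-s;-s,s] := by
    rw [Matrix.fromBlocks_multiply, Matrix.fromBlocks_multiply]
    simp only [Matrix.mul_zero, Matrix.zero_mul, add_zero, zero_add, e1, e2]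
  have hPiz : Piz lam t ε =
      (Matrix.fromBlocks !![a, 0; 0, b] 0 0 !![c, u; u, c]).submatrix eqIdx4 eqIdx4 := by
    rw [Piz_eq lam t ε, ← ha, ← hb, ← hc, ← hu]
  have hBP : muA lam t ε =
      (Matrix.fromBlocks !![0,0;0,b] 0 0 !![s,-s;-s,s]).submatrix eqIdx4 eqIdx4 := by
    rw [muA, Bfeas_eq_s7, hPiz, Matrix.submatrix_mul_equiv, Matrix.submatrix_mul_equiv, hmul]
  have hsub : (Matrix.fromBlocks (!![0,0;0,b] : Matrix (Fin 2) (Fin 2) ℂ) 0 0 !![s,-s;-s,s]) -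
      (Matrix.fromBlocks !![a, 0; 0, b] 0 0 !![c, u; u, c]) =
      Matrix.fromBlocks !![-a,0;0,0] 0 0 !![s-c,-s-u;-s-u,s-c] := by
    ext i j
    rcases i with i | i <;> rcases j with j | j <;>
      fin_cases i <;> fin_cases j <;>
        simp [Matrix.fromBlocks] <;> ring
  have hd : muA lam t ε - Piz lam t ε =
      (Matrix.fromBlocks !![-a,0;0,0] 0 0 !![s-c,-s-u;-s-u,s-c]).submatrix eqIdx4 eqIdx4 := by
    rw [hBP, hPiz, ← hsub]
    ext p q
    simp [Matrix.sub_apply, Matrix.submatrix_apply]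
  constructor
  · rw [hBP, key, cp2_aux, cp2_aux]
    have h2s : C (((Rr lam t + ε * t * (1 + lam)) / 4 : ℝ) : ℂ) = C (2 * s) := by
      congr 1
      rw [hs, hc, hu]
      push_cast
      ring
    rw [h2s]
    have hnss : C (-s) * C (-s) = C s * C s := by
      rw [← _root_.map_mul, ← _root_.map_mul]; ring_nf
    rw [hnss]
    simp only [map_zero, _root_.map_mul, map_ofNat]
    ring
  · rw [hd, key, cp2_aux, cp2_aux]
    have hna : C (-a) = C (((1 - ε * t) * (1 - lam) / 4 : ℝ) : ℂ) := by
      congr 1; rw [ha]; push_cast; ring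
    have h2q : C (((Rr lam t - ε * t * (1 + lam)) / 4 : ℝ) : ℂ) = C (2 * (s - c)) := by
      congr 1; rw [hs, hc, hu]; push_cast; ring
    have hq2 : C (-s - u) * C (-s - u) = C (s - c) * C (s - c) := by
      rw [← _root_.map_mul, ← _root_.map_mul]
      congr 1
      rw [hs]; ring
    rw [hna, h2q, hq2]
    simp only [map_zero, _root_.map_mul, map_ofNat]
    ring
end

section
/- Let λ, t ∈ [0,1] with (λ,t) ≠ (1,0). Set b = √(1/2 + tλ/R), c = √(1/2 − tλ/R), B⁺ = (1/2)·(I₄ + c·σx⊗σx − b·σx⊗σz), B⁻ = (1/2)·(I₄ + b·σx⊗σx − c·σx⊗σz), and μ^± = B^±·Π_x^±·B^±. Then μ⁺ and μ⁻ are positive semidefinite, μ⁺ − Π_x⁺ and μ⁻ − Π_x⁻ are positive semidefinite, and tr(μ⁺) + tr(μ⁻) = s_c(λ,t). -/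
open Matrix Kronecker ComplexOrder

noncomputable section
/-- `b = √(1/2 + tλ/R)`. -/
def bCoef (lam t : ℝ) : ℝ := Real.sqrt (1 / 2 + t * lam / Rr lam t)

/-- `c = √(1/2 − tλ/R)`. -/
def cCoef (lam t : ℝ) : ℝ := Real.sqrt (1 / 2 - t * lam / Rr lam t)

/-- `B⁺ = (1/2)(I₄ + c σx⊗σx − b σx⊗σz)`. -/
def BfeasP (lam t : ℝ) : Matrix (Fin 2 × Fin 2) (Fin 2 × Fin 2) ℂ :=
  (1 / 2 : ℂ) • ((1 : Matrix (Fin 2 × Fin 2) (Fin 2 × Fin 2) ℂ) +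
    ((cCoef lam t : ℝ) : ℂ) • (pauliX ⊗ₖ pauliX) -
    ((bCoef lam t : ℝ) : ℂ) • (pauliX ⊗ₖ pauliZ))

/-- `B⁻ = (1/2)(I₄ + b σx⊗σx − c σx⊗σz)`. -/
def BfeasM (lam t : ℝ) : Matrix (Fin 2 × Fin 2) (Fin 2 × Fin 2) ℂ :=
  (1 / 2 : ℂ) • ((1 : Matrix (Fin 2 × Fin 2) (Fin 2 × Fin 2) ℂ) +
    ((bCoef lam t : ℝ) : ℂ) • (pauliX ⊗ₖ pauliX) -
    ((cCoef lam t : ℝ) : ℂ) • (pauliX ⊗ₖ pauliZ))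

/-- `μ⁺ = B⁺ Π_x⁺ B⁺`. -/
def muCP (lam t : ℝ) : Matrix (Fin 2 × Fin 2) (Fin 2 × Fin 2) ℂ :=
  BfeasP lam t * Pix lam t 1 * BfeasP lam t

/-- `μ⁻ = B⁻ Π_x⁻ B⁻`. -/
def muCM (lam t : ℝ) : Matrix (Fin 2 × Fin 2) (Fin 2 × Fin 2) ℂ :=
  BfeasM lam t * Pix lam t (-1) * BfeasM lam t
end

set_option maxHeartbeats 1600000

section helpersCDF

noncomputable def colv (x0 x1 x2 x3 : ℝ) : Matrix (Fin 2 × Fin 2) (Fin 1) ℂ :=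
  Matrix.of fun i _ => ((!![x0, x1; x2, x3] : Matrix (Fin 2) (Fin 2) ℝ) i.1 i.2 : ℂ)

lemma psd_smul_outer (d : ℝ) (hd : 0 ≤ d) (w : Matrix (Fin 2 × Fin 2) (Fin 1) ℂ) :
    (((d : ℝ) : ℂ) • (w * wᴴ)).PosSemidef := by
  have h : ((d : ℝ) : ℂ) • (w * wᴴ)
      = ((((Real.sqrt d : ℝ) : ℂ) • w) * ((((Real.sqrt d : ℝ) : ℂ) • w)ᴴ)) := by
    rw [Matrix.conjTranspose_smul, Matrix.smul_mul, Matrix.mul_smul, smul_smul]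
    congr 1
    rw [Complex.star_def, Complex.conj_ofReal, ← Complex.ofReal_mul,
      Real.mul_self_sqrt hd]
  rw [h]
  exact Matrix.posSemidef_self_mul_conjTranspose _

end helpersCDF


lemma bc_sq (lam t : ℝ) (h0l : 0 ≤ lam) (hl1 : lam < 1) (h0t : 0 ≤ t) :
    bCoef lam t ^ 2 + cCoef lam t ^ 2 = 1 := by
  have hLam : 0 < (1-lam)*(1+3*lam) := mul_pos (by linarith) (by linarith)
  have hRpos : 0 < Rr lam t := by
    rw [Rr, Lambda]
    exact Real.sqrt_pos.mpr (by nlinarith only [hLam, sq_nonneg (t*lam)])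
  have h2tlR : 2*(t*lam) ≤ Rr lam t := by
    rw [Rr, Lambda]
    have h := Real.sqrt_le_sqrt
      (show (2*(t*lam))^2 ≤ (1-lam)*(1+3*lam) + 4*t^2*lam^2 by nlinarith only [hLam.le])
    rwa [Real.sqrt_sq (by positivity)] at h
  have hb2 : bCoef lam t^2 = 1/2 + t*lam/Rr lam t := by
    rw [bCoef]; exact Real.sq_sqrt (by positivity)
  have hc2 : cCoef lam t^2 = 1/2 - t*lam/Rr lam t := by
    rw [cCoef]
    exact Real.sq_sqrt (by rw [sub_nonneg, div_le_iff₀ hRpos]; linarith only [h2tlR])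
  linear_combination hb2 + hc2

lemma BfeasP_herm (lam t : ℝ) : (BfeasP lam t)ᴴ = BfeasP lam t := by
  ext ⟨i1, i2⟩ ⟨j1, j2⟩
  fin_cases i1 <;> fin_cases i2 <;> fin_cases j1 <;> fin_cases j2 <;>
    simp [BfeasP, pauliX, pauliZ, Matrix.conjTranspose_apply, Matrix.kroneckerMap_apply,
      Matrix.one_apply, Prod.mk.injEq, Fin.ext_iff, -Prod.mk_zero_zero, -Prod.mk_one_one, Complex.star_def, Complex.conj_ofReal]

lemma BfeasM_herm (lam t : ℝ) : (BfeasM lam t)ᴴ = BfeasM lam t := by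
  ext ⟨i1, i2⟩ ⟨j1, j2⟩
  fin_cases i1 <;> fin_cases i2 <;> fin_cases j1 <;> fin_cases j2 <;>
    simp [BfeasM, pauliX, pauliZ, Matrix.conjTranspose_apply, Matrix.kroneckerMap_apply,
      Matrix.one_apply, Prod.mk.injEq, Fin.ext_iff, -Prod.mk_zero_zero, -Prod.mk_one_one, Complex.star_def, Complex.conj_ofReal]

lemma BP_fix (lam t : ℝ) (h : bCoef lam t ^ 2 + cCoef lam t ^ 2 = 1) :
    (BfeasP lam t * colv 1 1 (cCoef lam t - bCoef lam t) (cCoef lam t + bCoef lam t)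
      = colv 1 1 (cCoef lam t - bCoef lam t) (cCoef lam t + bCoef lam t)) ∧
    (BfeasP lam t * colv 1 1 (bCoef lam t - cCoef lam t) (-(cCoef lam t + bCoef lam t)) = 0) ∧
    (BfeasP lam t * colv 1 (-1) (-(bCoef lam t + cCoef lam t)) (cCoef lam t - bCoef lam t)
      = colv 1 (-1) (-(bCoef lam t + cCoef lam t)) (cCoef lam t - bCoef lam t)) ∧
    (BfeasP lam t * colv 1 (-1) (bCoef lam t + cCoef lam t) (bCoef lam t - cCoef lam t) = 0) := by
  have hC := congrArg Complex.ofReal h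
  push_cast at hC
  refine ⟨?_, ?_, ?_, ?_⟩ <;>
    · ext ⟨i1, i2⟩ j
      fin_cases i1 <;> fin_cases i2 <;> fin_cases j <;>
        · simp [BfeasP, pauliX, pauliZ, colv, Matrix.mul_apply, Fintype.sum_prod_type,
            Matrix.one_apply, Prod.mk.injEq, Fin.ext_iff, -Prod.mk_zero_zero, -Prod.mk_one_one, Matrix.kroneckerMap_apply]
          push_cast
          first
            | ring1
            | linear_combination ((1:ℂ)/2) * hC
            | linear_combination (-(1:ℂ)/2) * hC

lemma BM_fix (lam t : ℝ) (h : bCoef lam t ^ 2 + cCoef lam t ^ 2 = 1) :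
    (BfeasM lam t * colv 1 1 (bCoef lam t - cCoef lam t) (bCoef lam t + cCoef lam t)
      = colv 1 1 (bCoef lam t - cCoef lam t) (bCoef lam t + cCoef lam t)) ∧
    (BfeasM lam t * colv 1 1 (cCoef lam t - bCoef lam t) (-(bCoef lam t + cCoef lam t)) = 0) ∧
    (BfeasM lam t * colv 1 (-1) (-(bCoef lam t + cCoef lam t)) (bCoef lam t - cCoef lam t)
      = colv 1 (-1) (-(bCoef lam t + cCoef lam t)) (bCoef lam t - cCoef lam t)) ∧
    (BfeasM lam t * colv 1 (-1) (bCoef lam t + cCoef lam t) (cCoef lam t - bCoef lam t) = 0) := by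
  have hC := congrArg Complex.ofReal h
  push_cast at hC
  refine ⟨?_, ?_, ?_, ?_⟩ <;>
    · ext ⟨i1, i2⟩ j
      fin_cases i1 <;> fin_cases i2 <;> fin_cases j <;>
        · simp [BfeasM, pauliX, pauliZ, colv, Matrix.mul_apply, Fintype.sum_prod_type,
            Matrix.one_apply, Prod.mk.injEq, Fin.ext_iff, -Prod.mk_zero_zero, -Prod.mk_one_one, Matrix.kroneckerMap_apply]
          push_cast
          first
            | ring1
            | linear_combination ((1:ℂ)/2) * hC
            | linear_combination (-(1:ℂ)/2) * hC

lemma trace_colv (x0 x1 x2 x3 : ℝ) :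
    (colv x0 x1 x2 x3 * (colv x0 x1 x2 x3)ᴴ).trace
      = ((x0^2 + x1^2 + x2^2 + x3^2 : ℝ) : ℂ) := by
  simp [colv, Matrix.trace, Matrix.diag, Matrix.mul_apply, Matrix.conjTranspose_apply,
    Fintype.sum_prod_type, Complex.star_def, Complex.conj_ofReal]
  push_cast
  ring

lemma pixP_eq (lam t : ℝ)
    (hJ1 : Real.sqrt (1-t) * (Tpp lam t + Tmm lam t)
      = Real.sqrt (1-t^2) * (Real.sqrt (1+3*lam) * (bCoef lam t + cCoef lam t)
          + Real.sqrt (1-lam) * (cCoef lam t - bCoef lam t)))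
    (hJ2 : Real.sqrt (1+t) * (Tpp lam t - Tmm lam t)
      = Real.sqrt (1-t^2) * (Real.sqrt (1+3*lam) * (bCoef lam t + cCoef lam t)
          - Real.sqrt (1-lam) * (cCoef lam t - bCoef lam t)))
    (hJ3 : Real.sqrt (1-t) * (Tmp lam t + Tpm lam t)
      = Real.sqrt (1-t^2) * (Real.sqrt (1+3*lam) * (bCoef lam t - cCoef lam t)
          + Real.sqrt (1-lam) * (bCoef lam t + cCoef lam t)))
    (hJ4 : Real.sqrt (1+t) * (Tmp lam t - Tpm lam t)
      = Real.sqrt (1-t^2) * (Real.sqrt (1+3*lam) * (cCoef lam t - bCoef lam t)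
          + Real.sqrt (1-lam) * (bCoef lam t + cCoef lam t))) :
    Pix lam t 1
      = (((Real.sqrt (1-lam) * Real.sqrt (1-t^2) * Real.sqrt (1+3*lam) / 16 : ℝ)) : ℂ) •
          (colv 1 1 (cCoef lam t - bCoef lam t) (cCoef lam t + bCoef lam t) *
           (colv 1 1 (cCoef lam t - bCoef lam t) (cCoef lam t + bCoef lam t))ᴴ)
        + (((Real.sqrt (1-lam) ^ 2 * Real.sqrt (1-t^2) / 16 : ℝ)) : ℂ) •
          (colv 1 (-1) (-(bCoef lam t + cCoef lam t)) (cCoef lam t - bCoef lam t) *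
           (colv 1 (-1) (-(bCoef lam t + cCoef lam t)) (cCoef lam t - bCoef lam t))ᴴ)
        - ((((Real.sqrt (1-lam) * Real.sqrt (1-t^2) * Real.sqrt (1+3*lam) / 16 : ℝ)) : ℂ) •
          (colv 1 1 (bCoef lam t - cCoef lam t) (-(cCoef lam t + bCoef lam t)) *
           (colv 1 1 (bCoef lam t - cCoef lam t) (-(cCoef lam t + bCoef lam t)))ᴴ)
        + (((Real.sqrt (1-lam) ^ 2 * Real.sqrt (1-t^2) / 16 : ℝ)) : ℂ) •
          (colv 1 (-1) (bCoef lam t + cCoef lam t) (bCoef lam t - cCoef lam t) *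
           (colv 1 (-1) (bCoef lam t + cCoef lam t) (bCoef lam t - cCoef lam t))ᴴ)) := by
  have h1C := congrArg Complex.ofReal hJ1
  have h2C := congrArg Complex.ofReal hJ2
  have h3C := congrArg Complex.ofReal hJ3
  have h4C := congrArg Complex.ofReal hJ4
  push_cast at h1C h2C h3C h4C
  ext ⟨i1, i2⟩ ⟨j1, j2⟩
  fin_cases i1 <;> fin_cases i2 <;> fin_cases j1 <;> fin_cases j2 <;>
    simp [Pix, Emat, colv, Matrix.mul_apply, Matrix.conjTranspose_apply,
        Matrix.kroneckerMap_apply, Complex.star_def, Complex.conj_ofReal] <;>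
    push_cast <;>
      first
        | ring1
        | linear_combination ((Real.sqrt (1-lam) : ℝ) : ℂ)/8 * h1C
        | linear_combination (-((Real.sqrt (1-lam) : ℝ) : ℂ)/8) * h1C
        | linear_combination ((Real.sqrt (1-lam) : ℝ) : ℂ)/8 * h2C
        | linear_combination (-((Real.sqrt (1-lam) : ℝ) : ℂ)/8) * h2C
        | linear_combination ((Real.sqrt (1-lam) : ℝ) : ℂ)/8 * h3C
        | linear_combination (-((Real.sqrt (1-lam) : ℝ) : ℂ)/8) * h3C
        | linear_combination ((Real.sqrt (1-lam) : ℝ) : ℂ)/8 * h4C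
        | linear_combination (-((Real.sqrt (1-lam) : ℝ) : ℂ)/8) * h4C

lemma pixM_eq (lam t : ℝ)
    (hJ1 : Real.sqrt (1-t) * (Tpp lam t + Tmm lam t)
      = Real.sqrt (1-t^2) * (Real.sqrt (1+3*lam) * (bCoef lam t + cCoef lam t)
          + Real.sqrt (1-lam) * (cCoef lam t - bCoef lam t)))
    (hJ2 : Real.sqrt (1+t) * (Tpp lam t - Tmm lam t)
      = Real.sqrt (1-t^2) * (Real.sqrt (1+3*lam) * (bCoef lam t + cCoef lam t)
          - Real.sqrt (1-lam) * (cCoef lam t - bCoef lam t)))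
    (hJ3 : Real.sqrt (1-t) * (Tmp lam t + Tpm lam t)
      = Real.sqrt (1-t^2) * (Real.sqrt (1+3*lam) * (bCoef lam t - cCoef lam t)
          + Real.sqrt (1-lam) * (bCoef lam t + cCoef lam t)))
    (hJ4 : Real.sqrt (1+t) * (Tmp lam t - Tpm lam t)
      = Real.sqrt (1-t^2) * (Real.sqrt (1+3*lam) * (cCoef lam t - bCoef lam t)
          + Real.sqrt (1-lam) * (bCoef lam t + cCoef lam t))) :
    Pix lam t (-1)
      = (((Real.sqrt (1-lam) * Real.sqrt (1-t^2) * Real.sqrt (1+3*lam) / 16 : ℝ)) : ℂ) •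
          (colv 1 1 (bCoef lam t - cCoef lam t) (bCoef lam t + cCoef lam t) *
           (colv 1 1 (bCoef lam t - cCoef lam t) (bCoef lam t + cCoef lam t))ᴴ)
        + (((Real.sqrt (1-lam) ^ 2 * Real.sqrt (1-t^2) / 16 : ℝ)) : ℂ) •
          (colv 1 (-1) (-(bCoef lam t + cCoef lam t)) (bCoef lam t - cCoef lam t) *
           (colv 1 (-1) (-(bCoef lam t + cCoef lam t)) (bCoef lam t - cCoef lam t))ᴴ)
        - ((((Real.sqrt (1-lam) * Real.sqrt (1-t^2) * Real.sqrt (1+3*lam) / 16 : ℝ)) : ℂ) •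
          (colv 1 1 (cCoef lam t - bCoef lam t) (-(bCoef lam t + cCoef lam t)) *
           (colv 1 1 (cCoef lam t - bCoef lam t) (-(bCoef lam t + cCoef lam t)))ᴴ)
        + (((Real.sqrt (1-lam) ^ 2 * Real.sqrt (1-t^2) / 16 : ℝ)) : ℂ) •
          (colv 1 (-1) (bCoef lam t + cCoef lam t) (cCoef lam t - bCoef lam t) *
           (colv 1 (-1) (bCoef lam t + cCoef lam t) (cCoef lam t - bCoef lam t))ᴴ)) := by
  have h1C := congrArg Complex.ofReal hJ1
  have h2C := congrArg Complex.ofReal hJ2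
  have h3C := congrArg Complex.ofReal hJ3
  have h4C := congrArg Complex.ofReal hJ4
  push_cast at h1C h2C h3C h4C
  ext ⟨i1, i2⟩ ⟨j1, j2⟩
  fin_cases i1 <;> fin_cases i2 <;> fin_cases j1 <;> fin_cases j2 <;>
    simp [Pix, Emat, colv, Matrix.mul_apply, Matrix.conjTranspose_apply,
        Matrix.kroneckerMap_apply, Complex.star_def, Complex.conj_ofReal] <;>
    push_cast <;>
      first
        | ring1
        | linear_combination ((Real.sqrt (1-lam) : ℝ) : ℂ)/8 * h1C
        | linear_combination (-((Real.sqrt (1-lam) : ℝ) : ℂ)/8) * h1C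
        | linear_combination ((Real.sqrt (1-lam) : ℝ) : ℂ)/8 * h2C
        | linear_combination (-((Real.sqrt (1-lam) : ℝ) : ℂ)/8) * h2C
        | linear_combination ((Real.sqrt (1-lam) : ℝ) : ℂ)/8 * h3C
        | linear_combination (-((Real.sqrt (1-lam) : ℝ) : ℂ)/8) * h3C
        | linear_combination ((Real.sqrt (1-lam) : ℝ) : ℂ)/8 * h4C
        | linear_combination (-((Real.sqrt (1-lam) : ℝ) : ℂ)/8) * h4C


lemma Jall (lam t : ℝ) (h0l : 0 ≤ lam) (hl1 : lam < 1) (h0t : 0 ≤ t) (ht1 : t < 1) :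
    (Real.sqrt (1-t) * (Tpp lam t + Tmm lam t)
      = Real.sqrt (1-t^2) * (Real.sqrt (1+3*lam) * (bCoef lam t + cCoef lam t)
          + Real.sqrt (1-lam) * (cCoef lam t - bCoef lam t))) ∧
    (Real.sqrt (1+t) * (Tpp lam t - Tmm lam t)
      = Real.sqrt (1-t^2) * (Real.sqrt (1+3*lam) * (bCoef lam t + cCoef lam t)
          - Real.sqrt (1-lam) * (cCoef lam t - bCoef lam t))) ∧
    (Real.sqrt (1-t) * (Tmp lam t + Tpm lam t)
      = Real.sqrt (1-t^2) * (Real.sqrt (1+3*lam) * (bCoef lam t - cCoef lam t)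
          + Real.sqrt (1-lam) * (bCoef lam t + cCoef lam t))) ∧
    (Real.sqrt (1+t) * (Tmp lam t - Tpm lam t)
      = Real.sqrt (1-t^2) * (Real.sqrt (1+3*lam) * (cCoef lam t - bCoef lam t)
          + Real.sqrt (1-lam) * (bCoef lam t + cCoef lam t))) := by
  have h1t2 : (0:ℝ) < 1 - t^2 := by nlinarith only [mul_pos (show (0:ℝ) < 1-t by linarith) (show (0:ℝ) < 1+t by linarith)]
  have hLam : (0:ℝ) < (1-lam)*(1+3*lam) := mul_pos (by linarith) (by linarith)
  simp only [Tpp, Tpm, Tmp, Tmm, bCoef, cCoef, Lambda, Rr, Real.sqrt_mul h1t2.le]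
  set s := Real.sqrt (1 - t^2) with hsdef
  set L := Real.sqrt ((1 - lam)*(1 + 3*lam)) with hLdef
  set R := Real.sqrt ((1 - lam)*(1 + 3*lam) + 4*t^2*lam^2) with hRdef
  set u := Real.sqrt (1 - lam) with hudef
  set m := Real.sqrt (1 + 3*lam) with hmdef
  set p := Real.sqrt (1 - t) with hpdef
  set q := Real.sqrt (1 + t) with hqdef
  have hs0 : 0 ≤ s := Real.sqrt_nonneg _
  have hL0 : 0 ≤ L := Real.sqrt_nonneg _
  have hu0 : 0 ≤ u := Real.sqrt_nonneg _
  have hm0 : 0 ≤ m := Real.sqrt_nonneg _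
  have hp0 : 0 ≤ p := Real.sqrt_nonneg _
  have hq0 : 0 ≤ q := Real.sqrt_nonneg _
  have hs2 : s^2 = 1 - t^2 := Real.sq_sqrt h1t2.le
  have hL2 : L^2 = 1 + 2*lam - 3*lam^2 := by
    rw [hLdef, Real.sq_sqrt hLam.le]; ring
  have hu2 : u^2 = 1 - lam := Real.sq_sqrt (by linarith)
  have hm2 : m^2 = 1 + 3*lam := Real.sq_sqrt (by linarith)
  have hp2 : p^2 = 1 - t := Real.sq_sqrt (by linarith)
  have hq2 : q^2 = 1 + t := Real.sq_sqrt (by linarith)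
  have hpq : p * q = s := by
    rw [hpdef, hqdef, ← Real.sqrt_mul (by linarith), hsdef]; ring_nf
  have hum : u * m = L := by
    rw [hudef, hmdef, ← Real.sqrt_mul (by linarith), hLdef]
  have hRpos : 0 < R := Real.sqrt_pos.mpr (by nlinarith only [hLam, sq_nonneg (t*lam)])
  have hR2 : R^2 = 1 + 2*lam - 3*lam^2 + 4*t^2*lam^2 := by
    rw [hRdef, Real.sq_sqrt (by nlinarith only [hLam.le, sq_nonneg (t*lam)])]; ring
  have hRV : R⁻¹ * R = 1 := inv_mul_cancel₀ hRpos.ne'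
  have hsle1 : s ≤ 1 := Real.sqrt_le_one.mpr (by nlinarith only [sq_nonneg t])
  have hsLR : s * L ≤ R := by
    rw [hsdef, hLdef, hRdef, ← Real.sqrt_mul h1t2.le]
    exact Real.sqrt_le_sqrt (by nlinarith only [mul_nonneg (sq_nonneg t) hLam.le, sq_nonneg (t*lam)])
  have h2tlR : 2*(t*lam) ≤ R := by
    have h := Real.sqrt_le_sqrt (show (2*(t*lam))^2 ≤ (1 - lam)*(1 + 3*lam) + 4*t^2*lam^2 by nlinarith only [hLam.le])
    rwa [Real.sqrt_sq (by positivity)] at h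

  set b := Real.sqrt (1/2 + t*lam/R) with hbdef
  set c := Real.sqrt (1/2 - t*lam/R) with hcdef
  have hb0 : 0 ≤ b := Real.sqrt_nonneg _
  have hc0 : 0 ≤ c := Real.sqrt_nonneg _
  have hb2 : b^2 = 1/2 + t*lam/R := Real.sq_sqrt (by positivity)
  have hcarg : (0:ℝ) ≤ 1/2 - t*lam/R := by
    rw [sub_nonneg, div_le_iff₀ hRpos]; linarith only [h2tlR]
  have hc2 : c^2 = 1/2 - t*lam/R := Real.sq_sqrt hcarg
  have hcb : c ≤ b := Real.sqrt_le_sqrt (by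
    have h : 0 ≤ t*lam/R := by positivity
    linarith only [h])
  have hbc : b * c = 1/2*(L*R⁻¹) := by
    rw [hbdef, hcdef, ← Real.sqrt_mul (by positivity)]
    have key2 : (1/2 + t*lam/R)*(1/2 - t*lam/R) * R^2 = (1/2*(L*R⁻¹))^2 * R^2 := by
      linear_combination ((-1/4)*L^2 + (-1/4)*L^2*R*R⁻¹ + -1*t^2*lam^2 + -1*t^2*lam^2*R*R⁻¹) * hRV + ((-1/4)) * hL2 + ((1/4)) * hR2
    have key := mul_right_cancel₀ (pow_ne_zero 2 hRpos.ne') key2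
    rw [key, Real.sqrt_sq (by positivity)]
  have hume : u ≤ m := Real.sqrt_le_sqrt (by linarith)
  set A := Real.sqrt ((1 + lam + 2*lam*s) * (1 + s*L/R)) with hAdef
  set B := Real.sqrt ((1 + lam + 2*lam*s) * (1 - s*L/R)) with hBdef
  set C := Real.sqrt ((1 + lam - 2*lam*s) * (1 + s*L/R)) with hCdef
  set D := Real.sqrt ((1 + lam - 2*lam*s) * (1 - s*L/R)) with hDdef
  have hA0 : 0 ≤ A := Real.sqrt_nonneg _
  have hB0 : 0 ≤ B := Real.sqrt_nonneg _
  have hC0 : 0 ≤ C := Real.sqrt_nonneg _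
  have hD0 : 0 ≤ D := Real.sqrt_nonneg _
  have haps : (0:ℝ) ≤ 1 + lam + 2*lam*s := by positivity
  have hams : (0:ℝ) ≤ 1 + lam - 2*lam*s := by nlinarith only [mul_nonneg h0l (sub_nonneg.2 hsle1), h0l, hl1]
  have hgp : (0:ℝ) ≤ 1 + s*L/R := by positivity
  have hgm : (0:ℝ) ≤ 1 - s*L/R := by
    rw [sub_nonneg, div_le_one hRpos]; exact hsLR
  have hA2 : A^2 = (1 + lam + 2*lam*s) * (1 + s*L/R) := Real.sq_sqrt (mul_nonneg haps hgp)
  have hB2 : B^2 = (1 + lam + 2*lam*s) * (1 - s*L/R) := Real.sq_sqrt (mul_nonneg haps hgm)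
  have hC2 : C^2 = (1 + lam - 2*lam*s) * (1 + s*L/R) := Real.sq_sqrt (mul_nonneg hams hgp)
  have hD2 : D^2 = (1 + lam - 2*lam*s) * (1 - s*L/R) := Real.sq_sqrt (mul_nonneg hams hgm)
  have hAD : A * D = t*(1+lam) := by
    rw [hAdef, hDdef, ← Real.sqrt_mul (mul_nonneg haps hgp)]
    have key2 : ((1 + lam + 2*lam*s) * (1 + s*L/R)) * ((1 + lam - 2*lam*s) * (1 - s*L/R)) * R^2
        = (t*(1+lam))^2 * R^2 := by
      linear_combination (-1*L^2*R^2*R⁻¹^2 + -2*lam*L^2*R^2*R⁻¹^2 + -4*lam^2*R^2 + 3*lam^2*L^2*R^2*R⁻¹^2 + 4*lam^2*s^2*L^2*R^2*R⁻¹^2 + -4*t^2*lam^2*L^2*R^2*R⁻¹^2) * hs2 + (-1*L^2 + -1*L^2*R*R⁻¹ + -2*lam*L^2 + -2*lam*L^2*R*R⁻¹ + 3*lam^2*L^2 + 3*lam^2*L^2*R*R⁻¹ + t^2*L^2 + t^2*L^2*R*R⁻¹ + 2*t^2*lam*L^2 + 2*t^2*lam*L^2*R*R⁻¹ + -7*t^2*lam^2*L^2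 + -7*t^2*lam^2*L^2*R*R⁻¹ + 4*t^4*lam^2*L^2 + 4*t^4*lam^2*L^2*R*R⁻¹) * hRV + (-1 + -2*lam + 3*lam^2 + t^2 + 2*t^2*lam + -7*t^2*lam^2 + 4*t^4*lam^2) * hL2 + (1 + 2*lam + -3*lam^2 + -1*t^2 + -2*t^2*lam + 3*t^2*lam^2) * hR2
    have key := mul_right_cancel₀ (pow_ne_zero 2 hRpos.ne') key2
    rw [key, Real.sqrt_sq (by positivity)]
  have hBC : B * C = t*(1+lam) := by
    rw [hBdef, hCdef, ← Real.sqrt_mul (mul_nonneg haps hgm)]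
    have key2 : ((1 + lam + 2*lam*s) * (1 - s*L/R)) * ((1 + lam - 2*lam*s) * (1 + s*L/R)) * R^2
        = (t*(1+lam))^2 * R^2 := by
      linear_combination (-1*L^2*R^2*R⁻¹^2 + -2*lam*L^2*R^2*R⁻¹^2 + -4*lam^2*R^2 + 3*lam^2*L^2*R^2*R⁻¹^2 + 4*lam^2*s^2*L^2*R^2*R⁻¹^2 + -4*t^2*lam^2*L^2*R^2*R⁻¹^2) * hs2 + (-1*L^2 + -1*L^2*R*R⁻¹ + -2*lam*L^2 + -2*lam*L^2*R*R⁻¹ + 3*lam^2*L^2 + 3*lam^2*L^2*R*R⁻¹ + t^2*L^2 + t^2*L^2*R*R⁻¹ + 2*t^2*lam*L^2 + 2*t^2*lam*L^2*R*R⁻¹ + -7*t^2*lam^2*L^2 + -7*t^2*lam^2*L^2*R*R⁻¹ + 4*t^4*lam^2*L^2 + 4*t^4*lam^2*L^2*R*R⁻¹) * hRV + (-1 + -2*lam + 3*lam^2 + t^2 + 2*t^2*lam + -7*t^2*lam^2 + 4*t^4*lam^2) * hL2 + (1 + 2*lam + -3*lam^2 + -1*t^2 + -2*t^2*lam + 3*t^2*lam^2)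 * hR2
    have key := mul_right_cancel₀ (pow_ne_zero 2 hRpos.ne') key2
    rw [key, Real.sqrt_sq (by positivity)]
  -- J1
  have hG1 : (p*(A+D))^2*R = (s*(m*(b+c)+u*(c-b)))^2*R := by
    linear_combination (2*R*p^2) * hAD + (R*p^2) * hA2 + (R*p^2) * hD2 + (-2*s^2*R*m^2 + 2*s^2*R*u^2) * hbc + (-1*s^2*R*m^2 + 2*s^2*R*u*m + -1*s^2*R*u^2) * hb2 + (-1*s^2*R*m^2 + -2*s^2*R*u*m + -1*s^2*R*u^2) * hc2 + (2*R + 2*lam*R + 4*lam*s^2*L*R*R⁻¹ + 2*t*R + 2*t*lam*R) * hp2 + (4*t*lam*s^2*R*R⁻¹) * hum + (-1*s^2*R + s^2*L*R*R⁻¹) * hu2 + (-1*s^2*R + -1*s^2*L*R*R⁻¹) * hm2 + (-2*R + -2*lam*R) * hs2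
  have hJ1rhs0 : 0 ≤ m*(b+c)+u*(c-b) := by
    nlinarith only [mul_le_mul_of_nonneg_right hume (sub_nonneg.2 hcb), mul_nonneg hm0 hc0]
  have hJ1 : p*(A+D) = s*(m*(b+c)+u*(c-b)) :=
    (sq_eq_sq₀ (by positivity) (mul_nonneg hs0 hJ1rhs0)).mp (mul_right_cancel₀ hRpos.ne' hG1)
  -- J2
  have hG2 : (q*(A-D))^2*R = (s*(m*(b+c)-u*(c-b)))^2*R := by
    linear_combination (-2*R*q^2) * hAD + (R*q^2) * hA2 + (R*q^2) * hD2 + (-2*s^2*R*m^2 + 2*s^2*R*u^2) * hbc + (-1*s^2*R*m^2 + -2*s^2*R*u*m + -1*s^2*R*u^2) * hb2 + (-1*s^2*R*m^2 + 2*s^2*R*u*m + -1*s^2*R*u^2) * hc2 + (2*R + 2*lam*R + 4*lam*s^2*L*R*R⁻¹ + -2*t*R + -2*t*lam*R) * hq2 + (-4*t*lam*s^2*R*R⁻¹) * hum + (-1*s^2*R + s^2*L*R*R⁻¹) * hu2 + (-1*s^2*R + -1*s^2*L*R*R⁻¹) * hm2 + (-2*R + -2*lam*R) * hs2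
  have hDA : D ≤ A := Real.sqrt_le_sqrt (by
    nlinarith only [mul_nonneg (mul_nonneg h0l hs0) (div_nonneg (mul_nonneg hs0 hL0) hRpos.le),
      div_nonneg (mul_nonneg hs0 hL0) hRpos.le, mul_nonneg h0l hs0, h0l])
  have hJ2rhs0 : 0 ≤ m*(b+c)-u*(c-b) := by
    nlinarith only [mul_nonneg hu0 (sub_nonneg.2 hcb), mul_nonneg hm0 (add_nonneg hb0 hc0)]
  have hJ2 : q*(A-D) = s*(m*(b+c)-u*(c-b)) :=
    (sq_eq_sq₀ (mul_nonneg hq0 (sub_nonneg.2 hDA)) (mul_nonneg hs0 hJ2rhs0)).mp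
      (mul_right_cancel₀ hRpos.ne' hG2)
  -- J3
  have hG3 : (p*(C+B))^2*R = (s*(m*(b-c)+u*(b+c)))^2*R := by
    linear_combination (2*R*p^2) * hBC + (R*p^2) * hB2 + (R*p^2) * hC2 + (2*s^2*R*m^2 + -2*s^2*R*u^2) * hbc + (-1*s^2*R*m^2 + -2*s^2*R*u*m + -1*s^2*R*u^2) * hb2 + (-1*s^2*R*m^2 + 2*s^2*R*u*m + -1*s^2*R*u^2) * hc2 + (2*R + 2*lam*R + -4*lam*s^2*L*R*R⁻¹ + 2*t*R + 2*t*lam*R) * hp2 + (-4*t*lam*s^2*R*R⁻¹) * hum + (-1*s^2*R + -1*s^2*L*R*R⁻¹) * hu2 + (-1*s^2*R + s^2*L*R*R⁻¹) * hm2 + (-2*R + -2*lam*R) * hs2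
  have hJ3rhs0 : 0 ≤ m*(b-c)+u*(b+c) := by
    nlinarith only [mul_nonneg hm0 (sub_nonneg.2 hcb), mul_nonneg hu0 (add_nonneg hb0 hc0)]
  have hJ3 : p*(C+B) = s*(m*(b-c)+u*(b+c)) :=
    (sq_eq_sq₀ (by positivity) (mul_nonneg hs0 hJ3rhs0)).mp (mul_right_cancel₀ hRpos.ne' hG3)
  -- J4
  have hdiff : (C^2 - B^2)*R = 2*(s*((1+lam)*L - 2*(lam*R))) := by
    linear_combination (-1*R) * hB2 + (R) * hC2 + (2*s*L + 2*lam*s*L) * hRV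
  have hwb : ((u*(b+c))^2 - (m*(b-c))^2)*R = 2*((1+lam)*L - 2*(lam*R)) := by
    linear_combination (2*R*m^2 + 2*R*u^2) * hbc + (-1*R*m^2 + R*u^2) * hb2 + (-1*R*m^2 + R*u^2) * hc2 + (R + L*R*R⁻¹) * hu2 + (-1*R + L*R*R⁻¹) * hm2 + (2*L + 2*lam*L) * hRV
  have hJ4 : q*(C-B) = s*(m*(c-b)+u*(b+c)) := by
    rcases le_or_gt 0 ((1+lam)*L - 2*(lam*R)) with hG|hG
    · have hB2C2 : B^2 ≤ C^2 := by nlinarith only [hdiff, mul_nonneg hs0 hG, hRpos]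
      have hBC' : B ≤ C := by
        rw [← Real.sqrt_sq hB0, ← Real.sqrt_sq hC0]; exact Real.sqrt_le_sqrt hB2C2
      have hwbge : (m*(b-c))^2 ≤ (u*(b+c))^2 := by nlinarith only [hwb, hG, hRpos]
      have hwbge' : m*(b-c) ≤ u*(b+c) := by
        rw [← Real.sqrt_sq (mul_nonneg hm0 (sub_nonneg.2 hcb)),
          ← Real.sqrt_sq (mul_nonneg hu0 (add_nonneg hb0 hc0))]
        exact Real.sqrt_le_sqrt hwbge
      have hG4 : (q*(C-B))^2*R = (s*(m*(c-b)+u*(b+c)))^2*R := by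
        linear_combination (-2*R*q^2) * hBC + (R*q^2) * hB2 + (R*q^2) * hC2 + (2*s^2*R*m^2 + -2*s^2*R*u^2) * hbc + (-1*s^2*R*m^2 + 2*s^2*R*u*m + -1*s^2*R*u^2) * hb2 + (-1*s^2*R*m^2 + -2*s^2*R*u*m + -1*s^2*R*u^2) * hc2 + (2*R + 2*lam*R + -4*lam*s^2*L*R*R⁻¹ + -2*t*R + -2*t*lam*R) * hq2 + (4*t*lam*s^2*R*R⁻¹) * hum + (-1*s^2*R + -1*s^2*L*R*R⁻¹) * hu2 + (-1*s^2*R + s^2*L*R*R⁻¹) * hm2 + (-2*R + -2*lam*R) * hs2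
      exact (sq_eq_sq₀ (mul_nonneg hq0 (sub_nonneg.2 hBC'))
        (mul_nonneg hs0 (by linarith only [hwbge']))).mp (mul_right_cancel₀ hRpos.ne' hG4)
    · have hC2B2 : C^2 ≤ B^2 := by
        nlinarith only [hdiff, mul_nonpos_of_nonneg_of_nonpos hs0 hG.le, hRpos]
      have hCB' : C ≤ B := by
        rw [← Real.sqrt_sq hC0, ← Real.sqrt_sq hB0]; exact Real.sqrt_le_sqrt hC2B2
      have hwbge : (u*(b+c))^2 ≤ (m*(b-c))^2 := by nlinarith only [hwb, hG, hRpos]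
      have hwbge' : u*(b+c) ≤ m*(b-c) := by
        rw [← Real.sqrt_sq (mul_nonneg hm0 (sub_nonneg.2 hcb)),
          ← Real.sqrt_sq (mul_nonneg hu0 (add_nonneg hb0 hc0))]
        exact Real.sqrt_le_sqrt hwbge
      have hG4 : (q*(B-C))^2*R = (s*(m*(b-c)-u*(b+c)))^2*R := by
        linear_combination (-2*R*q^2) * hBC + (R*q^2) * hB2 + (R*q^2) * hC2 + (2*s^2*R*m^2 + -2*s^2*R*u^2) * hbc + (-1*s^2*R*m^2 + 2*s^2*R*u*m + -1*s^2*R*u^2) * hb2 + (-1*s^2*R*m^2 + -2*s^2*R*u*m + -1*s^2*R*u^2) * hc2 + (2*R + 2*lam*R + -4*lam*s^2*L*R*R⁻¹ + -2*t*R + -2*t*lam*R) * hq2 + (4*t*lam*s^2*R*R⁻¹) * hum + (-1*s^2*R + -1*s^2*L*R*R⁻¹) * hu2 + (-1*s^2*R + s^2*L*R*R⁻¹) * hm2 + (-2*R + -2*lam*R) * hs2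
      have h := (sq_eq_sq₀ (mul_nonneg hq0 (sub_nonneg.2 hCB'))
        (mul_nonneg hs0 (by linarith only [hwbge']))).mp (mul_right_cancel₀ hRpos.ne' hG4)
      linear_combination -h
  exact ⟨hJ1, hJ2, hJ3, hJ4⟩

/-- **Dual feasibility, complementary case.** With `μ^± = B^± Π_x^± B^±`: the matrices
`μ⁺, μ⁻` and `μ⁺ − Π_x⁺`, `μ⁻ − Π_x⁻` are positive semidefinite, and
`tr(μ⁺) + tr(μ⁻) = s_c(λ,t)`. -/
theorem complementary_dual_feasible (lam t : ℝ)
    (hlam : lam ∈ Set.Icc (0 : ℝ) 1) (ht : t ∈ Set.Icc (0 : ℝ) 1)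
    (hne : (lam, t) ≠ (1, 0)) :
    (muCP lam t).PosSemidef ∧ (muCM lam t).PosSemidef ∧
    (muCP lam t - Pix lam t 1).PosSemidef ∧
    (muCM lam t - Pix lam t (-1)).PosSemidef ∧
    (muCP lam t).trace + (muCM lam t).trace = (sC lam t : ℂ) := by
  obtain ⟨h0l, hle1⟩ := hlam
  obtain ⟨h0t, hte1⟩ := ht
  by_cases hl1 : lam = 1
  · subst hl1
    have hPix : ∀ ε : ℝ, Pix 1 t ε = 0 := by
      intro ε
      rw [Pix]
      norm_num
    have h1 : muCP 1 t = 0 := by rw [muCP, hPix]; simp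
    have h2 : muCM 1 t = 0 := by rw [muCM, hPix]; simp
    refine ⟨?_, ?_, ?_, ?_, ?_⟩
    · rw [h1]; exact Matrix.PosSemidef.zero
    · rw [h2]; exact Matrix.PosSemidef.zero
    · rw [h1, hPix, sub_zero]; exact Matrix.PosSemidef.zero
    · rw [h2, hPix, sub_zero]; exact Matrix.PosSemidef.zero
    · rw [h1, h2, Matrix.trace_zero, sC, Lambda]
      norm_num
  by_cases ht1 : t = 1
  · subst ht1
    have hz : Real.sqrt ((1 - (1:ℝ)^2) * Lambda lam) = 0 := by norm_num
    have hsz : Real.sqrt (1 - (1:ℝ)^2) = 0 := by norm_num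
    have hTa : Tpp lam 1 = Real.sqrt (1 + lam) := by rw [Tpp, hz, hsz]; norm_num
    have hTb : Tpm lam 1 = Real.sqrt (1 + lam) := by rw [Tpm, hz, hsz]; norm_num
    have hTc : Tmp lam 1 = Real.sqrt (1 + lam) := by rw [Tmp, hz, hsz]; norm_num
    have hTd : Tmm lam 1 = Real.sqrt (1 + lam) := by rw [Tmm, hz, hsz]; norm_num
    have hE1 : Emat lam 1 1 = 0 := by
      ext i j
      fin_cases i <;> fin_cases j <;> simp [Emat, hTa, hTb, hTc, hTd] <;> norm_num
    have hE2 : Emat lam 1 (-1) = 0 := by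
      ext i j
      fin_cases i <;> fin_cases j <;> simp [Emat, hTa, hTb, hTc, hTd] <;> norm_num
    have hPix1 : Pix lam 1 1 = 0 := by rw [Pix, hE1]; simp
    have hPix2 : Pix lam 1 (-1) = 0 := by rw [Pix, hE2]; simp
    have h1 : muCP lam 1 = 0 := by rw [muCP, hPix1]; simp
    have h2 : muCM lam 1 = 0 := by rw [muCM, hPix2]; simp
    refine ⟨?_, ?_, ?_, ?_, ?_⟩
    · rw [h1]; exact Matrix.PosSemidef.zero
    · rw [h2]; exact Matrix.PosSemidef.zero
    · rw [h1, hPix1, sub_zero]; exact Matrix.PosSemidef.zero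
    · rw [h2, hPix2, sub_zero]; exact Matrix.PosSemidef.zero
    · rw [h1, h2, Matrix.trace_zero, sC]
      norm_num
  -- main case
  have hl1' : lam < 1 := lt_of_le_of_ne hle1 hl1
  have ht1' : t < 1 := lt_of_le_of_ne hte1 ht1
  obtain ⟨hJ1, hJ2, hJ3, hJ4⟩ := Jall lam t h0l hl1' h0t ht1'
  have hbc1 : bCoef lam t ^ 2 + cCoef lam t ^ 2 = 1 := bc_sq lam t h0l hl1' h0t
  obtain ⟨hBw1, hBw2, hBw3, hBw4⟩ := BP_fix lam t hbc1
  obtain ⟨hBv1, hBv2, hBv3, hBv4⟩ := BM_fix lam t hbc1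
  have hP1 := pixP_eq lam t hJ1 hJ2 hJ3 hJ4
  have hP2 := pixM_eq lam t hJ1 hJ2 hJ3 hJ4
  set b := bCoef lam t with hbdef
  set c := cCoef lam t with hcdef
  set d1 : ℝ := Real.sqrt (1-lam) * Real.sqrt (1-t^2) * Real.sqrt (1+3*lam) / 16 with hd1def
  set d2 : ℝ := Real.sqrt (1-lam) ^ 2 * Real.sqrt (1-t^2) / 16 with hd2def
  set w1p := colv 1 1 (c - b) (c + b) with hw1pdef
  set w1m := colv 1 1 (b - c) (-(c + b)) with hw1mdef
  set w2p := colv 1 (-1) (-(b + c)) (c - b) with hw2pdef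
  set w2m := colv 1 (-1) (b + c) (b - c) with hw2mdef
  set v1p := colv 1 1 (b - c) (b + c) with hv1pdef
  set v1m := colv 1 1 (c - b) (-(b + c)) with hv1mdef
  set v2p := colv 1 (-1) (-(b + c)) (b - c) with hv2pdef
  set v2m := colv 1 (-1) (b + c) (c - b) with hv2mdef
  have hd10 : 0 ≤ d1 := by rw [hd1def]; positivity
  have hd20 : 0 ≤ d2 := by rw [hd2def]; positivity
  have hBH := BfeasP_herm lam t
  have hBH' := BfeasM_herm lam t
  have keyP : ∀ w : Matrix (Fin 2 × Fin 2) (Fin 1) ℂ,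
      BfeasP lam t * w = w → wᴴ * BfeasP lam t = wᴴ := by
    intro w hw
    calc wᴴ * BfeasP lam t = (BfeasP lam t * w)ᴴ := by
          rw [Matrix.conjTranspose_mul, hBH]
      _ = wᴴ := by rw [hw]
  have keyP0 : ∀ w : Matrix (Fin 2 × Fin 2) (Fin 1) ℂ,
      BfeasP lam t * w = 0 → wᴴ * BfeasP lam t = 0 := by
    intro w hw
    calc wᴴ * BfeasP lam t = (BfeasP lam t * w)ᴴ := by
          rw [Matrix.conjTranspose_mul, hBH]
      _ = 0 := by rw [hw, Matrix.conjTranspose_zero]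
  have keyM : ∀ w : Matrix (Fin 2 × Fin 2) (Fin 1) ℂ,
      BfeasM lam t * w = w → wᴴ * BfeasM lam t = wᴴ := by
    intro w hw
    calc wᴴ * BfeasM lam t = (BfeasM lam t * w)ᴴ := by
          rw [Matrix.conjTranspose_mul, hBH']
      _ = wᴴ := by rw [hw]
  have keyM0 : ∀ w : Matrix (Fin 2 × Fin 2) (Fin 1) ℂ,
      BfeasM lam t * w = 0 → wᴴ * BfeasM lam t = 0 := by
    intro w hw
    calc wᴴ * BfeasM lam t = (BfeasM lam t * w)ᴴ := by
          rw [Matrix.conjTranspose_mul, hBH']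
      _ = 0 := by rw [hw, Matrix.conjTranspose_zero]
  have mu_eqP : muCP lam t = ((d1 : ℝ) : ℂ) • (w1p * w1pᴴ) + ((d2 : ℝ) : ℂ) • (w2p * w2pᴴ) := by
    rw [muCP, hP1]
    simp only [Matrix.mul_sub, Matrix.sub_mul, Matrix.mul_add, Matrix.add_mul,
      Matrix.mul_smul, Matrix.smul_mul, Matrix.mul_assoc]
    rw [keyP w1p hBw1, keyP0 w1m hBw2, keyP w2p hBw3, keyP0 w2m hBw4]
    simp only [Matrix.mul_zero, smul_zero, sub_zero, add_zero, zero_add,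
      ← Matrix.mul_assoc]
    rw [hBw1, hBw3]
  have mu_eqM : muCM lam t = ((d1 : ℝ) : ℂ) • (v1p * v1pᴴ) + ((d2 : ℝ) : ℂ) • (v2p * v2pᴴ) := by
    rw [muCM, hP2]
    simp only [Matrix.mul_sub, Matrix.sub_mul, Matrix.mul_add, Matrix.add_mul,
      Matrix.mul_smul, Matrix.smul_mul, Matrix.mul_assoc]
    rw [keyM v1p hBv1, keyM0 v1m hBv2, keyM v2p hBv3, keyM0 v2m hBv4]
    simp only [Matrix.mul_zero, smul_zero, sub_zero, add_zero, zero_add,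
      ← Matrix.mul_assoc]
    rw [hBv1, hBv3]
  have mu_subP : muCP lam t - Pix lam t 1
      = ((d1 : ℝ) : ℂ) • (w1m * w1mᴴ) + ((d2 : ℝ) : ℂ) • (w2m * w2mᴴ) := by
    rw [mu_eqP, hP1]; abel
  have mu_subM : muCM lam t - Pix lam t (-1)
      = ((d1 : ℝ) : ℂ) • (v1m * v1mᴴ) + ((d2 : ℝ) : ℂ) • (v2m * v2mᴴ) := by
    rw [mu_eqM, hP2]; abel
  have hu2 : Real.sqrt (1-lam) ^ 2 = 1 - lam := Real.sq_sqrt (by linarith)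
  have hum : Real.sqrt (1-lam) * Real.sqrt (1+3*lam) = Real.sqrt ((1-lam) * (1+3*lam)) :=
    (Real.sqrt_mul (by linarith) _).symm
  refine ⟨?_, ?_, ?_, ?_, ?_⟩
  · rw [mu_eqP]
    exact (psd_smul_outer d1 hd10 w1p).add (psd_smul_outer d2 hd20 w2p)
  · rw [mu_eqM]
    exact (psd_smul_outer d1 hd10 v1p).add (psd_smul_outer d2 hd20 v2p)
  · rw [mu_subP]
    exact (psd_smul_outer d1 hd10 w1m).add (psd_smul_outer d2 hd20 w2m)
  · rw [mu_subM]
    exact (psd_smul_outer d1 hd10 v1m).add (psd_smul_outer d2 hd20 v2m)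
  · rw [mu_eqP, mu_eqM]
    simp only [Matrix.trace_add, Matrix.trace_smul, hw1pdef, hw2pdef, hv1pdef, hv2pdef,
      trace_colv, smul_eq_mul]
    have hC := congrArg Complex.ofReal hbc1
    have humC := congrArg Complex.ofReal hum
    have hu2C := congrArg Complex.ofReal hu2
    push_cast at hC humC hu2C
    rw [sC, Lambda, hd1def, hd2def]
    push_cast
    linear_combination (((Real.sqrt (1-lam) : ℝ) : ℂ) * ((Real.sqrt (1-t^2) : ℝ) : ℂ)
        * ((Real.sqrt (1+3*lam) : ℝ) : ℂ) / 4
        + ((Real.sqrt (1-lam) : ℝ) : ℂ)^2 * ((Real.sqrt (1-t^2) : ℝ) : ℂ) / 4) * hC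
      + ((Real.sqrt (1-t^2) : ℝ) : ℂ)/2 * humC
      + ((Real.sqrt (1-t^2) : ℝ) : ℂ)/2 * hu2C
end
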